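/- If b = ∞ and ψ is bounded above by a polynomial, i.e., ψ(p) ≤ C p^k for some C, k > 0, then lim_{δ → 1−} φ_{G(ψ)}(δ) = φ_{G(ψ)}(1) and φ_{G(ψ)} is continuous on (0, 1]. -/
import Mathlib


open Real Set Filter

/-- If `b = ∞` and `ψ` is bounded above by a polynomial (`ψ(p) ≤ C·p^k`), then
`φ_{G(ψ)}` is continuous on `(0,1]` and `lim_{δ→1⁻} φ_{G(ψ)}(δ) = φ_{G(ψ)}(1)`. -/
theorem fundamental_function_continuity
    (ψ : ℝ → ℝ)
    (hψpos : ∀ p, 1 ≤ p → 0 < ψ p)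
    (hψcont : ContinuousOn ψ (Set.Ici 1))
    (hψmono : StrictMonoOn ψ (Set.Ici 1))
    (hψtend : Filter.Tendsto ψ Filter.atTop Filter.atTop)
    (C k : ℝ) (hC : 0 < C) (hk : 0 < k)
    (hψpoly : ∀ p : ℝ, 1 ≤ p → ψ p ≤ C * p ^ k)
    (φ : ℝ → ℝ)
    (hφ : ∀ δ : ℝ, 0 < δ → δ ≤ 1 →
      φ δ = sSup {r : ℝ | ∃ p : ℝ, 1 ≤ p ∧ r = δ ^ (1/p) / ψ p}) :
    ContinuousOn φ (Set.Ioc 0 1) ∧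
    Filter.Tendsto φ (nhdsWithin 1 (Set.Iio 1)) (nhds (φ 1)) := by
  have hψ1 : 0 < ψ 1 := hψpos 1 le_rfl
  have hψle : ∀ p : ℝ, 1 ≤ p → ψ 1 ≤ ψ p := fun p hp =>
    hψmono.monotoneOn self_mem_Ici hp hp
  set S : ℝ → Set ℝ := fun δ => {r : ℝ | ∃ p : ℝ, 1 ≤ p ∧ r = δ ^ (1/p) / ψ p} with hS
  have hne : ∀ δ : ℝ, (S δ).Nonempty := fun δ => ⟨δ ^ (1/(1:ℝ)) / ψ 1, 1, le_rfl, rfl⟩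
  have hbdd : ∀ δ : ℝ, 0 < δ → δ ≤ 1 → BddAbove (S δ) := by
    intro δ hδ hδ1
    refine ⟨1 / ψ 1, ?_⟩
    rintro r ⟨p, hp, rfl⟩
    have hψp := hψpos p hp
    have h1 : δ ^ (1/p) ≤ 1 := Real.rpow_le_one hδ.le hδ1 (by positivity)
    exact div_le_div₀ (by norm_num) h1 hψ1 (hψle p hp)
  -- key estimate
  have hkey : ∀ δ δ' : ℝ, 0 < δ → δ ≤ δ' → δ' ≤ 1 →
      φ δ ≤ φ δ' ∧ φ δ' ≤ φ δ + (δ' - δ) / (δ' * ψ 1) := by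
    intro δ δ' hδ hle hδ'1
    have hδ' : 0 < δ' := lt_of_lt_of_le hδ hle
    have hδ1 : δ ≤ 1 := hle.trans hδ'1
    rw [hφ δ hδ hδ1, hφ δ' hδ' hδ'1]
    constructor
    · refine csSup_le (hne δ) ?_
      rintro r ⟨p, hp, rfl⟩
      refine le_trans ?_ (le_csSup (hbdd δ' hδ' hδ'1) ⟨p, hp, rfl⟩)
      have hψp := hψpos p hp
      have hnum : δ ^ (1/p) ≤ δ' ^ (1/p) :=
        Real.rpow_le_rpow hδ.le hle (by positivity)
      exact div_le_div_of_nonneg_right hnum hψp.le |>.trans_eq rfl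
    · refine csSup_le (hne δ') ?_
      rintro r ⟨p, hp, rfl⟩
      have hψp := hψpos p hp
      have hp0 : (0:ℝ) < p := lt_of_lt_of_le one_pos hp
      have hx : 0 < δ / δ' := by positivity
      have hx1 : δ / δ' ≤ 1 := (div_le_one hδ').mpr hle
      have hinvp : 1/p ≤ 1 := by
        rw [div_le_one hp0]; exact hp
      -- δ^(1/p) ≥ δ'^(1/p) * (δ/δ')
      have hmul : δ' ^ (1/p) * (δ/δ') ≤ δ ^ (1/p) := by
        have h1 : (δ/δ') ^ (1:ℝ) ≤ (δ/δ') ^ (1/p) :=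
          Real.rpow_le_rpow_of_exponent_ge hx hx1 hinvp
        rw [Real.rpow_one] at h1
        calc δ' ^ (1/p) * (δ/δ') ≤ δ' ^ (1/p) * (δ/δ') ^ (1/p) := by
              have : (0:ℝ) ≤ δ' ^ (1/p) := by positivity
              nlinarith
          _ = (δ' * (δ/δ')) ^ (1/p) := (Real.mul_rpow hδ'.le hx.le).symm
          _ = δ ^ (1/p) := by rw [mul_div_cancel₀ _ (ne_of_gt hδ')]
      have hd1 : δ' ^ (1/p) ≤ 1 := Real.rpow_le_one hδ'.le hδ'1 (by positivity)
      have hdiff : δ' ^ (1/p) - δ ^ (1/p) ≤ (δ' - δ)/δ' := by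
        have : δ' ^ (1/p) - δ ^ (1/p) ≤ δ' ^ (1/p) * (1 - δ/δ') := by nlinarith
        calc δ' ^ (1/p) - δ ^ (1/p) ≤ δ' ^ (1/p) * (1 - δ/δ') := this
          _ ≤ 1 * (1 - δ/δ') := by nlinarith
          _ = (δ' - δ)/δ' := by field_simp
      have hstep : δ' ^ (1/p) / ψ p ≤ δ ^ (1/p) / ψ p + (δ' - δ) / (δ' * ψ 1) := by
        have h2 : (δ' ^ (1/p) - δ ^ (1/p)) / ψ p ≤ ((δ' - δ)/δ') / ψ p :=
          div_le_div_of_nonneg_right hdiff hψp.le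
        have h3 : ((δ' - δ)/δ') / ψ p ≤ ((δ' - δ)/δ') / ψ 1 :=
          div_le_div_of_nonneg_left (div_nonneg (by linarith) hδ'.le) hψ1 (hψle p hp)
        have h4 : ((δ' - δ)/δ') / ψ 1 = (δ' - δ) / (δ' * ψ 1) := by
          rw [div_div]
        have := (h2.trans h3).trans_eq h4
        rw [sub_div] at this
        linarith
      refine hstep.trans ?_
      have := le_csSup (hbdd δ hδ hδ1) (⟨p, hp, rfl⟩ : δ ^ (1/p) / ψ p ∈ S δ)
      linarith
  -- continuity on Ioc 0 1
  have hcont : ∀ δ0 ∈ Set.Ioc (0:ℝ) 1, ContinuousWithinAt φ (Set.Ioc 0 1) δ0 := by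
    intro δ0 ⟨hδ0, hδ01⟩
    rw [ContinuousWithinAt, Metric.tendsto_nhdsWithin_nhds]
    intro ε hε
    refine ⟨ε * (δ0 * ψ 1), by positivity, ?_⟩
    rintro x ⟨hx0, hx1⟩ hdist
    rw [Real.dist_eq] at hdist ⊢
    have hb : |φ x - φ δ0| ≤ |x - δ0| / (δ0 * ψ 1) := by
      rcases le_total x δ0 with h | h
      · obtain ⟨h1, h2⟩ := hkey x δ0 hx0 h hδ01
        rw [abs_sub_comm, abs_of_nonneg (by linarith), abs_of_nonpos (by linarith)]
        have : -(x - δ0) = δ0 - x := by ring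
        rw [this]
        linarith
      · obtain ⟨h1, h2⟩ := hkey δ0 x hδ0 h hx1
        rw [abs_of_nonneg (by linarith), abs_of_nonneg (by linarith)]
        have h3 : (x - δ0) / (x * ψ 1) ≤ (x - δ0) / (δ0 * ψ 1) :=
          div_le_div_of_nonneg_left (by linarith) (by positivity)
            (by nlinarith)
        linarith
    calc |φ x - φ δ0| ≤ |x - δ0| / (δ0 * ψ 1) := hb
      _ < (ε * (δ0 * ψ 1)) / (δ0 * ψ 1) := by
          gcongr
      _ = ε := by field_simp
  refine ⟨hcont, ?_⟩
  have h1 : ContinuousWithinAt φ (Set.Ioc 0 1) 1 := hcont 1 ⟨one_pos, le_rfl⟩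
  refine h1.mono_left ?_
  rw [← nhdsWithin_Ioo_eq_nhdsLT (one_pos : (0:ℝ) < 1)]
  exact nhdsWithin_mono _ Set.Ioo_subset_Ioc_self
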